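/- Let (Kⱼ)_{j≥1} be compact metric spaces and suppose each C(Kⱼ) has an Auerbach basis (f_{k,j}; f*_{k,j})_{k≥0} with f_{0,j} the constant function 1. Then the unitization X = (C(K₁) ⊕ C(K₂) ⊕ ...)_{c₀} ⊕ 1 admits an Auerbach basis (x_k; x_k*)_{k≥0} with x₀ = (0, 1). -/

import Mathlib

/-- An Auerbach basis of a normed space: a biorthogonal system of norm-one vectors and
norm-one functionals which is fundamental (the closed linear span of the vectors is the
whole space) and total (the functionals separate points). -/
structure IsAuerbachBasis {X : Type*} [NormedAddCommGroup X] [NormedSpace ℝ X]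
    {ι : Type*} (x : ι → X) (f : ι → X →L[ℝ] ℝ) : Prop where
  biorth_eq : ∀ k, f k (x k) = 1
  biorth_ne : ∀ k j, k ≠ j → f k (x j) = 0
  norm_vec : ∀ n, ‖x n‖ = 1
  norm_fun : ∀ n, ‖f n‖ = 1
  fundamental : (Submodule.span ℝ (Set.range x)).topologicalClosure = ⊤
  total : ∀ y, (∀ n, f n y = 0) → y = 0

open scoped ENNReal
set_option synthInstance.maxHeartbeats 1000000
set_option maxHeartbeats 1000000

/-- The unitization `X = (C(K₁) ⊕ C(K₂) ⊕ ⋯)_{c₀} ⊕ 1`, realized isometrically inside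
`ℓ^∞(∏ⱼ C(Kⱼ))` as the set of sequences `(gⱼ)ⱼ` such that `gⱼ - c • 1 → 0` in norm for
some constant `c`: the pair `((fⱼ)ⱼ, c)` corresponds to `(fⱼ + c • 1)ⱼ`, which has exactly
the norm `supⱼ sup_{ω ∈ Kⱼ} |fⱼ(ω) + c|`. -/
noncomputable def unitizationSub (K : ℕ → Type*) [∀ j, MetricSpace (K j)]
    [∀ j, CompactSpace (K j)] : Submodule ℝ (lp (fun j => C(K j, ℝ)) ∞) where
  carrier := {g | ∃ c : ℝ,
    Filter.Tendsto (fun j => ‖g j - c • (1 : C(K j, ℝ))‖) Filter.atTop (nhds 0)}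
  zero_mem' := ⟨0, by simp⟩
  add_mem' := by
    rintro y z ⟨c1, h1⟩ ⟨c2, h2⟩
    refine ⟨c1 + c2, squeeze_zero (fun j => norm_nonneg _) (fun j => ?_)
      (by simpa using h1.add h2)⟩
    have : (↑(y + z) : ∀ j, C(K j, ℝ)) j - (c1 + c2) • 1
        = (y j - c1 • 1) + (z j - c2 • 1) := by
      rw [lp.coeFn_add]
      simp [add_smul]
      abel
    rw [this]
    exact norm_add_le _ _
  smul_mem' := by
    rintro c y ⟨c0, h⟩
    refine ⟨c * c0, ?_⟩
    have : ∀ j, ‖(↑(c • y) : ∀ j, C(K j, ℝ)) j - (c * c0) • (1 : C(K j, ℝ))‖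
        = ‖c‖ * ‖y j - c0 • (1 : C(K j, ℝ))‖ := by
      intro j
      rw [lp.coeFn_smul]
      rw [show (c • (y : ∀ j, C(K j, ℝ))) j - (c * c0) • (1 : C(K j, ℝ))
          = c • (y j - c0 • 1) by simp [smul_smul, smul_sub]]
      exact norm_smul c (y j - c0 • (1 : C(K j, ℝ)))
    simp only [this]
    simpa using h.const_mul ‖c‖

/-
The basis consists of the "staircases" `stair m`, equal to `-1` on the blocks `j < m` and to `1`
on the others (so `stair 0 = 1`), and the vectors `f_{k,j}`, `k ≥ 1`, placed in block `j`. With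
`φⱼ = f*_{0,j}`, the dual functionals are `(φ₀ g₀ + lim g) / 2`, `(φₘ gₘ - φₘ₋₁ gₘ₋₁) / 2` and
`f*_{k,j}(gⱼ)`. Each of the two halves has norm at most `1/2`, which is why staircases are used
instead of the units of the single blocks, whose dual functionals `φₘ gₘ - lim g` have norm `2`.
Since `stair m - stair (m + 1)` is twice the unit of block `m`, the closed span contains every
block, hence the whole `c₀`-part and `X`. If all functionals vanish on `g`, then `φⱼ gⱼ` is
constant in `j`, equal to its limit `lim g`, and the first functional forces it to be `0`.
-/

open Filter Topology

theorem lp.tendsto_sum_range_single_infty {E : ℕ → Type*} [∀ i, NormedAddCommGroup (E i)]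
    (g : lp E ∞) (hg : Tendsto (fun j => ‖g j‖) atTop (𝓝 0)) :
    Tendsto (fun n => ∑ j ∈ Finset.range n, lp.single ∞ j (g j)) atTop (𝓝 g) := by
  rw [NormedAddCommGroup.tendsto_atTop]
  intro ε hε
  obtain ⟨N, hN⟩ := (hg.eventually (gt_mem_nhds (half_pos hε))).exists_forall_of_atTop
  refine ⟨N, fun n hn => (lp.norm_le_of_forall_le (half_pos hε).le fun i => ?_).trans_lt
    (half_lt_self hε)⟩
  rw [lp.coeFn_sub, lp.coeFn_sum, Pi.sub_apply, Finset.sum_apply]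
  simp only [lp.coeFn_single, Finset.sum_pi_single, Finset.mem_range]
  split_ifs with hi
  · simpa using (half_pos hε).le
  · simpa using (hN i (by omega)).le

lemma norm_inv_two_smul_add_le_one {E : Type*} [SeminormedAddCommGroup E] [NormedSpace ℝ E]
    {a b : E} (ha : ‖a‖ ≤ 1) (hb : ‖b‖ ≤ 1) : ‖(2⁻¹ : ℝ) • (a + b)‖ ≤ 1 := by
  rw [norm_smul, Real.norm_of_nonneg (by norm_num)]
  linarith [norm_add_le a b]

lemma ContinuousMap.nonempty_of_norm_eq_one {K : Type*} [TopologicalSpace K] [CompactSpace K]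
    {g : C(K, ℝ)} (hg : ‖g‖ = 1) : Nonempty K := by
  by_contra hK
  rw [not_nonempty_iff] at hK
  simp [Subsingleton.elim g 0] at hg

namespace IsAuerbachBasis

variable {X : Type*} [NormedAddCommGroup X] [NormedSpace ℝ X] {ι : Type*}
  {x : ι → X} {f : ι → X →L[ℝ] ℝ}

/-- The norms come for free: `1 = f n (x n) ≤ ‖f n‖ * ‖x n‖` with both factors at most `1`. -/
theorem of_biorthogonal [DecidableEq ι] (hfx : ∀ k n, f k (x n) = if k = n then 1 else 0)
    (hx : ∀ n, ‖x n‖ ≤ 1) (hf : ∀ n, ‖f n‖ ≤ 1)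
    (fundamental : (Submodule.span ℝ (Set.range x)).topologicalClosure = ⊤)
    (total : ∀ y, (∀ n, f n y = 0) → y = 0) : IsAuerbachBasis x f := by
  have hfxn : ∀ n, f n (x n) = 1 := fun n => by simpa using hfx n n
  have one_le : ∀ n, 1 ≤ ‖f n‖ * ‖x n‖ := fun n => by
    simpa [hfxn n] using (f n).le_opNorm (x n)
  refine ⟨hfxn, fun k n hkn => by simpa [hkn] using hfx k n, fun n => ?_, fun n => ?_,
    fundamental, total⟩
  · nlinarith [one_le n, hx n, hf n, norm_nonneg (f n), norm_nonneg (x n)]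
  · nlinarith [one_le n, hx n, hf n, norm_nonneg (f n), norm_nonneg (x n)]

theorem apply_eq_ite [DecidableEq ι] (h : IsAuerbachBasis x f) (k n : ι) :
    f k (x n) = if k = n then 1 else 0 := by
  split_ifs with hkn
  · exact hkn ▸ h.biorth_eq k
  · exact h.biorth_ne k n hkn

theorem reindex (h : IsAuerbachBasis x f) {ι' : Type*} (e : ι' ≃ ι) :
    IsAuerbachBasis (x ∘ e) (f ∘ e) where
  biorth_eq k := h.biorth_eq (e k)
  biorth_ne k j hkj := h.biorth_ne _ _ (e.injective.ne hkj)
  norm_vec n := h.norm_vec _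
  norm_fun n := h.norm_fun _
  fundamental := by
    rw [Set.range_comp, Equiv.range_eq_univ, Set.image_univ]
    exact h.fundamental
  total y hy := h.total y fun n => by simpa using hy (e.symm n)

end IsAuerbachBasis

namespace unitizationSub

variable {K : ℕ → Type*} [∀ j, MetricSpace (K j)] [∀ j, CompactSpace (K j)]

local notation "L" => lp (fun j => C(K j, ℝ)) ∞

lemma tendsto_of_eventually_eq {u : ∀ j, C(K j, ℝ)} {c : ℝ} (h : ∀ᶠ j in atTop, u j = c • 1) :
    Tendsto (fun j => ‖u j - c • (1 : C(K j, ℝ))‖) atTop (𝓝 0) :=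
  tendsto_const_nhds.congr' (h.mono fun j hj => by simp [hj])

lemma mem_of_eventually_eq {g : L} (c : ℝ) (h : ∀ᶠ j in atTop, g j = c • 1) :
    g ∈ unitizationSub K :=
  ⟨c, tendsto_of_eventually_eq h⟩

noncomputable def single (j : ℕ) : C(K j, ℝ) →L[ℝ] unitizationSub K :=
  (lp.singleContinuousLinearMap ℝ (fun j => C(K j, ℝ)) ∞ j).codRestrict _ fun a =>
    mem_of_eventually_eq 0 <| (eventually_gt_atTop j).mono fun i hi => by
      simp [Pi.single_eq_of_ne hi.ne']

lemma coe_single (j : ℕ) (a : C(K j, ℝ)) : (single j a : L) = lp.single ∞ j a := rfl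

lemma norm_single (j : ℕ) (a : C(K j, ℝ)) : ‖single j a‖ = ‖a‖ :=
  lp.norm_single (E := fun j => C(K j, ℝ)) ENNReal.zero_lt_top j a

noncomputable def proj (j : ℕ) : unitizationSub K →L[ℝ] C(K j, ℝ) :=
  (lp.evalCLM ℝ (fun j => C(K j, ℝ)) ∞ j).comp (unitizationSub K).subtypeL

lemma proj_apply (j : ℕ) (g : unitizationSub K) : proj j g = (g : L) j := rfl

lemma norm_apply_le (g : unitizationSub K) (j : ℕ) : ‖(g : L) j‖ ≤ ‖g‖ :=
  lp.norm_apply_le_norm ENNReal.top_ne_zero (g : L) j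

lemma norm_proj_le (j : ℕ) : ‖proj (K := K) j‖ ≤ 1 :=
  ContinuousLinearMap.opNorm_le_bound _ zero_le_one fun g => by
    rw [one_mul, proj_apply]
    exact norm_apply_le g j

lemma proj_single_self (j : ℕ) (a : C(K j, ℝ)) : proj j (single j a) = a :=
  lp.single_apply_self ∞ _ _

lemma proj_single_of_ne {i j : ℕ} (h : i ≠ j) (a : C(K j, ℝ)) : proj i (single j a) = 0 :=
  lp.single_apply_ne ∞ _ _ h

lemma tendsto_sum_single_proj {g : unitizationSub K}
    (hg : Tendsto (fun j => ‖proj j g‖) atTop (𝓝 0)) :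
    Tendsto (fun n => ∑ j ∈ Finset.range n, single j (proj j g)) atTop (𝓝 g) := by
  rw [tendsto_subtype_rng]
  simpa only [Submodule.coe_sum, coe_single, proj_apply] using
    lp.tendsto_sum_range_single_infty (g : L) hg

lemma norm_ite_neg_one_one_le {j : ℕ} (p : Prop) [Decidable p] :
    ‖(if p then -1 else 1 : C(K j, ℝ))‖ ≤ 1 :=
  (ContinuousMap.norm_le _ zero_le_one).2 fun ω => by split_ifs <;> simp

noncomputable def stair (m : ℕ) : unitizationSub K :=
  ⟨⟨fun j => if j < m then -1 else 1, memℓp_infty ⟨1, by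
      rintro _ ⟨j, rfl⟩
      exact norm_ite_neg_one_one_le _⟩⟩,
    mem_of_eventually_eq 1 <| (eventually_ge_atTop m).mono fun j hj => by simp [not_lt.2 hj]⟩

lemma proj_stair (m j : ℕ) : proj j (stair (K := K) m) = if j < m then -1 else 1 := rfl

lemma apply_proj_stair {j : ℕ} (φ : C(K j, ℝ) →L[ℝ] ℝ) (m : ℕ) :
    φ (proj j (stair m)) = if j < m then -φ 1 else φ 1 := by
  rw [proj_stair]
  split_ifs <;> simp

lemma norm_stair_le (m : ℕ) : ‖stair (K := K) m‖ ≤ 1 :=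
  lp.norm_le_of_forall_le zero_le_one fun j => norm_ite_neg_one_one_le (j < m)

lemma single_one_eq_sub_stair (m : ℕ) :
    single m (1 : C(K m, ℝ)) = (2⁻¹ : ℝ) • (stair m - stair (m + 1)) := by
  refine Subtype.ext (lp.ext (funext fun j => ?_))
  change proj j (single m 1) = proj j ((2⁻¹ : ℝ) • (stair m - stair (m + 1)))
  rw [map_smul, map_sub, proj_stair, proj_stair]
  rcases lt_trichotomy j m with h | rfl | h
  · rw [proj_single_of_ne h.ne, if_pos h, if_pos (by omega)]
    simp
  · rw [proj_single_self, if_neg (lt_irrefl j), if_pos (by omega)]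
    ext ω
    simp only [ContinuousMap.one_apply, ContinuousMap.smul_apply, ContinuousMap.sub_apply,
      ContinuousMap.neg_apply, smul_eq_mul]
    norm_num
  · rw [proj_single_of_ne h.ne', if_neg (by omega), if_neg (by omega)]
    simp

lemma tendsto_apply_of_tendsto {u : ∀ j, C(K j, ℝ)} {c : ℝ}
    (hu : Tendsto (fun j => ‖u j - c • (1 : C(K j, ℝ))‖) atTop (𝓝 0))
    {φ : ∀ j, C(K j, ℝ) →L[ℝ] ℝ} (hφ1 : ∀ j, φ j 1 = 1) (hφ : ∀ j, ‖φ j‖ ≤ 1) :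
    Tendsto (fun j => φ j (u j)) atTop (𝓝 c) := by
  refine tendsto_sub_nhds_zero_iff.1 (squeeze_zero_norm (fun j => ?_) hu)
  calc ‖φ j (u j) - c‖ = ‖φ j (u j - c • 1)‖ := by simp [hφ1]
    _ ≤ ‖u j - c • 1‖ := (φ j).le_of_opNorm_le (hφ j) _ |>.trans_eq (one_mul _)

lemma exists_tendsto_norm_sub_smul_one (g : unitizationSub K) :
    ∃ c : ℝ, Tendsto (fun j => ‖(g : L) j - c • (1 : C(K j, ℝ))‖) atTop (𝓝 0) := g.2

lemma tendsto_apply_choose (g : unitizationSub K) {φ : ∀ j, C(K j, ℝ) →L[ℝ] ℝ}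
    (hφ1 : ∀ j, φ j 1 = 1) (hφ : ∀ j, ‖φ j‖ ≤ 1) :
    Tendsto (fun j => φ j ((g : L) j)) atTop
      (𝓝 (exists_tendsto_norm_sub_smul_one g).choose) :=
  tendsto_apply_of_tendsto (exists_tendsto_norm_sub_smul_one g).choose_spec hφ1 hφ

section Limit

variable [∀ j, Nonempty (K j)]

lemma exists_normalized_functionals :
    ∃ φ : ∀ j, C(K j, ℝ) →L[ℝ] ℝ, (∀ j, φ j 1 = 1) ∧ ∀ j, ‖φ j‖ ≤ 1 :=
  ⟨fun j => ContinuousMap.evalCLM ℝ (Classical.arbitrary (K j)), fun j => rfl, fun j =>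
    ContinuousLinearMap.opNorm_le_bound _ zero_le_one fun a => by
      simpa using a.norm_coe_le_norm _⟩

/-- The constant `c` of the pair `((fⱼ)ⱼ, c)`. -/
noncomputable def limit : unitizationSub K →L[ℝ] ℝ :=
  LinearMap.mkContinuous
    { toFun := fun g => (exists_tendsto_norm_sub_smul_one g).choose
      map_add' := fun g h => by
        obtain ⟨φ, hφ1, hφ⟩ := exists_normalized_functionals (K := K)
        refine tendsto_nhds_unique (tendsto_apply_choose (g + h) hφ1 hφ) ?_
        simpa only [Submodule.coe_add, lp.coeFn_add, Pi.add_apply, map_add] using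
          (tendsto_apply_choose g hφ1 hφ).add (tendsto_apply_choose h hφ1 hφ)
      map_smul' := fun c g => by
        obtain ⟨φ, hφ1, hφ⟩ := exists_normalized_functionals (K := K)
        refine tendsto_nhds_unique (tendsto_apply_choose (c • g) hφ1 hφ) ?_
        simpa only [Submodule.coe_smul, lp.coeFn_smul, Pi.smul_apply, map_smul, smul_eq_mul,
          RingHom.id_apply] using (tendsto_apply_choose g hφ1 hφ).const_mul c }
    1 fun g => by
      obtain ⟨φ, hφ1, hφ⟩ := exists_normalized_functionals (K := K)
      show ‖(exists_tendsto_norm_sub_smul_one g).choose‖ ≤ 1 * ‖g‖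
      rw [one_mul]
      exact le_of_tendsto' (tendsto_apply_choose g hφ1 hφ).norm fun j =>
        ((φ j).le_of_opNorm_le (hφ j) _).trans ((one_mul _).trans_le (norm_apply_le g j))

lemma limit_apply (g : unitizationSub K) :
    limit g = (exists_tendsto_norm_sub_smul_one g).choose :=
  rfl

lemma norm_limit_le : ‖limit (K := K)‖ ≤ 1 :=
  LinearMap.mkContinuous_norm_le _ zero_le_one _

lemma tendsto_apply_limit (g : unitizationSub K) {φ : ∀ j, C(K j, ℝ) →L[ℝ] ℝ}
    (hφ1 : ∀ j, φ j 1 = 1) (hφ : ∀ j, ‖φ j‖ ≤ 1) :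
    Tendsto (fun j => φ j (proj j g)) atTop (𝓝 (limit g)) := by
  simpa only [proj_apply, limit_apply] using tendsto_apply_choose g hφ1 hφ

lemma tendsto_norm_proj_sub_limit_smul_one (g : unitizationSub K) :
    Tendsto (fun j => ‖proj j g - limit g • (1 : C(K j, ℝ))‖) atTop (𝓝 0) := by
  simpa only [proj_apply, limit_apply] using (exists_tendsto_norm_sub_smul_one g).choose_spec

lemma limit_eq {g : unitizationSub K} {c : ℝ}
    (h : Tendsto (fun j => ‖proj j g - c • (1 : C(K j, ℝ))‖) atTop (𝓝 0)) : limit g = c := by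
  obtain ⟨φ, hφ1, hφ⟩ := exists_normalized_functionals (K := K)
  exact tendsto_nhds_unique (tendsto_apply_limit g hφ1 hφ) (tendsto_apply_of_tendsto h hφ1 hφ)

lemma limit_stair (m : ℕ) : limit (stair (K := K) m) = 1 :=
  limit_eq <| tendsto_of_eventually_eq <| (eventually_ge_atTop m).mono fun j hj => by
    rw [proj_stair, if_neg (not_lt.2 hj), one_smul]

lemma limit_single (j : ℕ) (a : C(K j, ℝ)) : limit (single j a) = 0 :=
  limit_eq <| tendsto_of_eventually_eq <| (eventually_gt_atTop j).mono fun i hi => by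
    simp [proj_single_of_ne hi.ne']

lemma proj_sub_limit_smul_stair_zero (g : unitizationSub K) (j : ℕ) :
    proj j (g - limit g • stair 0) = proj j g - limit g • 1 := by
  rw [map_sub, map_smul, proj_stair, if_neg (Nat.not_lt_zero j)]

end Limit

section AuerbachBasis

noncomputable def basisVec (f : ∀ j, ℕ → C(K j, ℝ)) : ℕ ⊕ ℕ × ℕ → unitizationSub K
  | .inl m => stair m
  | .inr (j, k) => single j (f j (k + 1))

noncomputable def basisFun [∀ j, Nonempty (K j)] (fs : ∀ j, ℕ → C(K j, ℝ) →L[ℝ] ℝ) :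
    ℕ ⊕ ℕ × ℕ → unitizationSub K →L[ℝ] ℝ
  | .inl 0 => (2⁻¹ : ℝ) • ((fs 0 0).comp (proj 0) + limit)
  | .inl (m + 1) => (2⁻¹ : ℝ) • ((fs (m + 1) 0).comp (proj (m + 1)) - (fs m 0).comp (proj m))
  | .inr (j, k) => (fs j (k + 1)).comp (proj j)

variable {f : ∀ j, ℕ → C(K j, ℝ)} {fs : ∀ j, ℕ → C(K j, ℝ) →L[ℝ] ℝ}

lemma norm_basisVec_le (hf : ∀ j k, ‖f j k‖ = 1) (a : ℕ ⊕ ℕ × ℕ) : ‖basisVec f a‖ ≤ 1 := by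
  rcases a with m | ⟨j, k⟩
  · exact norm_stair_le m
  · exact (norm_single j _).trans_le (hf j (k + 1)).le

lemma apply_proj_single_of_isAuerbachBasis (hb : ∀ j, IsAuerbachBasis (f j) (fs j))
    (i k j n : ℕ) : fs i k (proj i (single j (f j n))) = if i = j ∧ k = n then 1 else 0 := by
  rcases eq_or_ne i j with rfl | hij
  · simp [proj_single_self, (hb i).apply_eq_ite]
  · simp [proj_single_of_ne hij, hij]

variable [∀ j, Nonempty (K j)]

lemma basisFun_inl_apply_stair (hfs : ∀ j, fs j 0 1 = 1) (m m' : ℕ) :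
    basisFun fs (.inl m) (stair m') = if m = m' then 1 else 0 := by
  rcases m with _ | m <;>
    simp only [basisFun, add_apply, sub_apply, smul_apply, ContinuousLinearMap.comp_apply,
      apply_proj_stair, hfs, limit_stair, smul_eq_mul] <;>
    split_ifs <;> (try norm_num) <;> omega

lemma basisFun_apply_basisVec (hb : ∀ j, IsAuerbachBasis (f j) (fs j)) (hone : ∀ j, f j 0 = 1)
    (a b : ℕ ⊕ ℕ × ℕ) : basisFun fs a (basisVec f b) = if a = b then 1 else 0 := by
  have hfs_one : ∀ j k, fs j k 1 = if k = 0 then 1 else 0 := fun j k => by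
    simpa [hone j] using (hb j).apply_eq_ite k 0
  rcases a with m | ⟨j, k⟩ <;> rcases b with m' | ⟨j', k'⟩
  · simpa [basisVec] using basisFun_inl_apply_stair (fun j => by simp [hfs_one]) m m'
  · rcases m with _ | m <;>
      simp [basisFun, basisVec, apply_proj_single_of_isAuerbachBasis hb, limit_single]
  · simp [basisFun, basisVec, apply_proj_stair, hfs_one]
  · simp [basisFun, basisVec, apply_proj_single_of_isAuerbachBasis hb]

lemma norm_basisFun_le (hfs : ∀ j k, ‖fs j k‖ = 1) (a : ℕ ⊕ ℕ × ℕ) : ‖basisFun fs a‖ ≤ 1 := by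
  have hcomp : ∀ j k, ‖(fs j k).comp (proj j)‖ ≤ 1 := fun j k =>
    ((fs j k).opNorm_comp_le _).trans <|
      mul_le_one₀ (hfs j k).le (ContinuousLinearMap.opNorm_nonneg _) (norm_proj_le j)
  rcases a with (_ | m) | ⟨j, k⟩
  · exact norm_inv_two_smul_add_le_one (E := unitizationSub K →L[ℝ] ℝ) (hcomp 0 0)
      norm_limit_le
  · rw [basisFun, sub_eq_add_neg]
    exact norm_inv_two_smul_add_le_one (E := unitizationSub K →L[ℝ] ℝ) (hcomp _ _)
      ((ContinuousLinearMap.opNorm_neg _).trans_le (hcomp _ _))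
  · exact hcomp j (k + 1)

lemma closure_span_basisVec
    (hf : ∀ j, (Submodule.span ℝ (Set.range (f j))).topologicalClosure = ⊤)
    (hone : ∀ j, f j 0 = 1) :
    (Submodule.span ℝ (Set.range (basisVec (K := K) f))).topologicalClosure = ⊤ := by
  set M := (Submodule.span ℝ (Set.range (basisVec (K := K) f))).topologicalClosure
  have hM : IsClosed (M : Set (unitizationSub K)) := Submodule.isClosed_topologicalClosure _
  have hvec : ∀ a, basisVec f a ∈ M := fun a =>
    Submodule.le_topologicalClosure _ (Submodule.subset_span (Set.mem_range_self a))
  have hsingle : ∀ j a, single j a ∈ M := by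
    intro j
    have hspan : Submodule.span ℝ (Set.range (f j)) ≤ M.comap (single j).toLinearMap := by
      rw [Submodule.span_le]
      rintro _ ⟨_ | k, rfl⟩
      · change single j (f j 0) ∈ M
        rw [hone j, single_one_eq_sub_stair]
        exact M.smul_mem _ (M.sub_mem (hvec (.inl j)) (hvec (.inl (j + 1))))
      · exact hvec (.inr (j, k))
    have := Submodule.topologicalClosure_minimal _ hspan (hM.preimage (single j).continuous)
    rw [hf j] at this
    exact fun a => this Submodule.mem_top
  rw [Submodule.eq_top_iff']
  intro g
  have hrest : g - limit g • stair 0 ∈ M := by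
    refine hM.mem_of_tendsto (tendsto_sum_single_proj ?_)
      (Eventually.of_forall fun n => M.sum_mem fun j _ => hsingle j _)
    simpa only [proj_sub_limit_smul_stair_zero] using tendsto_norm_proj_sub_limit_smul_one g
  have hstair : stair 0 ∈ M := hvec (.inl 0)
  simpa using M.add_mem hrest (M.smul_mem (limit g) hstair)

lemma eq_zero_of_forall_basisFun_eq_zero (hb : ∀ j, IsAuerbachBasis (f j) (fs j))
    (hone : ∀ j, f j 0 = 1) (g : unitizationSub K) (hg : ∀ a, basisFun fs a g = 0) : g = 0 := by
  have hstep : ∀ m, fs (m + 1) 0 (proj (m + 1) g) = fs m 0 (proj m g) := fun m => by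
    simpa only [basisFun, smul_apply, sub_apply, ContinuousLinearMap.comp_apply, smul_eq_mul,
      mul_eq_zero, inv_eq_zero, two_ne_zero, false_or, sub_eq_zero] using hg (.inl (m + 1))
  have hconst : ∀ j, fs j 0 (proj j g) = fs 0 0 (proj 0 g) :=
    Nat.rec rfl fun m ih => (hstep m).trans ih
  have hlim : fs 0 0 (proj 0 g) = limit g := by
    have hfs_one : ∀ j, fs j 0 1 = 1 := fun j => hone j ▸ (hb j).biorth_eq 0
    exact tendsto_nhds_unique tendsto_const_nhds
      ((tendsto_apply_limit g hfs_one fun j => ((hb j).norm_fun 0).le).congr hconst)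
  have hzero : fs 0 0 (proj 0 g) = 0 := by
    have := hg (.inl 0)
    simp only [basisFun, smul_apply, add_apply, ContinuousLinearMap.comp_apply, smul_eq_mul,
      mul_eq_zero, inv_eq_zero, two_ne_zero, false_or, ← hlim] at this
    linarith
  have hproj : ∀ j, proj j g = 0 := fun j => (hb j).total _ fun k => by
    rcases k with _ | k
    · rw [hconst, hzero]
    · exact hg (.inr (j, k))
  exact Subtype.ext (lp.ext (funext hproj))

theorem isAuerbachBasis_basisVec_basisFun (hb : ∀ j, IsAuerbachBasis (f j) (fs j))
    (hone : ∀ j, f j 0 = 1) : IsAuerbachBasis (basisVec (K := K) f) (basisFun fs) :=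
  .of_biorthogonal (basisFun_apply_basisVec hb hone) (norm_basisVec_le fun j => (hb j).norm_vec)
    (norm_basisFun_le fun j => (hb j).norm_fun)
    (closure_span_basisVec (fun j => (hb j).fundamental) hone)
    (eq_zero_of_forall_basisFun_eq_zero hb hone)

end AuerbachBasis

end unitizationSub

/-- If every `C(Kⱼ)` has an Auerbach basis `(f_{k,j}; f^*_{k,j})_{k≥0}`
whose zeroth vector is the constant function `1`, then the unitization
`X = (C(K₁) ⊕ C(K₂) ⊕ ⋯)_{c₀} ⊕ 1` admits an Auerbach basis `(x_k; x_k^*)_{k≥0}` with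
`x₀ = (0, 1)`, i.e. the element all of whose blocks are the constant function `1`. -/
theorem stmt16 (K : ℕ → Type) [∀ j, MetricSpace (K j)] [∀ j, CompactSpace (K j)]
    (f : ∀ j, ℕ → C(K j, ℝ)) (fs : ∀ j, ℕ → C(K j, ℝ) →L[ℝ] ℝ)
    (hb : ∀ j, IsAuerbachBasis (f j) (fs j)) (hone : ∀ j, f j 0 = 1) :
    ∃ (x : ℕ → unitizationSub K) (xs : ℕ → (unitizationSub K) →L[ℝ] ℝ),
      IsAuerbachBasis x xs ∧
      ∀ j : ℕ, (x 0 : lp (fun j => C(K j, ℝ)) ∞) j = 1 := by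
  have : ∀ j, Nonempty (K j) := fun j =>
    ContinuousMap.nonempty_of_norm_eq_one ((hb j).norm_vec 0)
  exact ⟨_, _, (unitizationSub.isAuerbachBasis_basisVec_basisFun hb hone).reindex
    (Denumerable.eqv _).symm, fun j => rfl⟩
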